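/- arXiv:2010.13720 — 9 statements merged into one kernel-verified Lean document; each statement's English description precedes it below -/
import Mathlib

section
/- For integers r ≥ 2, x ≥ 1, and any integer b with b = α(1+x·r)+β where 0 ≤ α < r and 0 ≤ β < 1+x·r, one has b - x·⌊b/(1+x·r)⌋ - (r-1)·⌊b/r⌋ = α + β - (r-1)·⌊(α+β)/r⌋. -/
namespace Int

theorem mul_add_fdiv_of_nonneg_of_lt (a : ℤ) {b c : ℤ} (hb0 : 0 ≤ b) (hbc : b < c) :
    (a * c + b).fdiv c = a := by
  rw [add_comm, add_mul_fdiv_right _ _ (by omega), fdiv_eq_zero_of_lt hb0 hbc, zero_add]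

end Int

theorem stmt_0_general (r x b α β : ℤ) (hr : 2 ≤ r)
    (hβ0 : 0 ≤ β) (hβ : β < 1 + x * r)
    (hb : b = α * (1 + x * r) + β) :
    b - x * (Int.fdiv b (1 + x * r)) - (r - 1) * (Int.fdiv b r)
      = α + β - (r - 1) * (Int.fdiv (α + β) r) := by
  have hdiv_long : b.fdiv (1 + x * r) = α := hb ▸ Int.mul_add_fdiv_of_nonneg_of_lt α hβ0 hβ
  have hdiv_r : b.fdiv r = (α + β).fdiv r + α * x := by
    rw [show b = (α + β) + α * x * r by rw [hb]; ring, Int.add_mul_fdiv_right _ _ (by omega)]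
  rw [hdiv_long, hdiv_r, hb]
  ring

theorem stmt_0 (r x b α β : ℤ) (hr : 2 ≤ r) (hx : 1 ≤ x)
    (hα0 : 0 ≤ α) (hαr : α < r) (hβ0 : 0 ≤ β) (hβ : β < 1 + x * r)
    (hb : b = α * (1 + x * r) + β) :
    b - x * (Int.fdiv b (1 + x * r)) - (r - 1) * (Int.fdiv b r)
      = α + β - (r - 1) * (Int.fdiv (α + β) r) :=
  stmt_0_general r x b α β hr hβ0 hβ hb
end

section
/- Let r ≥ 2 and x ≥ 1 be integers. The number of integers b with 0 ≤ b ≤ r(xr+1)-1 satisfying b - x·⌊b/(1+xr)⌋ - (r-1)·⌊b/r⌋ = 1 equals r + 2. -/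
/-!
Write `b = (1 + x r) q + s` with `0 ≤ s < 1 + x r`. Since `b = (q + s) + q x r`, one
has `⌊b / r⌋ = ⌊(q + s) / r⌋ + q x`, and the weight `w(b)` collapses to `⌊t / r⌋ + (t mod r)`
with `t = q + s`, the digit sum of `t` in base `r` when `t < r²`. This equals `1` exactly
when `t = 1` or `t = r`, giving the two points `b = 1, 1 + x r` and the `r` points
`(1 + x r) k + (r - k)`, `0 ≤ k < r`.
-/

open Finset

/-- The exponent `w(q, b)` of the Ehrhart `h*`-polynomial. -/
def weight (r x b : ℤ) : ℤ :=
  b - x * Int.fdiv b (1 + x * r) - (r - 1) * Int.fdiv b r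

lemma weight_mul_add {r x q s : ℤ} (hr : 0 < r) (hs0 : 0 ≤ s) (hs : s < 1 + x * r) :
    weight r x ((1 + x * r) * q + s) = (q + s) / r + (q + s) % r := by
  have hd : 0 < 1 + x * r := by linarith
  have hdiv_d : ((1 + x * r) * q + s) / (1 + x * r) = q := by
    rw [Int.mul_add_ediv_left _ _ hd.ne', Int.ediv_eq_zero_of_lt hs0 hs, add_zero]
  have hdiv_r : ((1 + x * r) * q + s) / r = (q + s) / r + q * x := by
    rw [show (1 + x * r) * q + s = (q + s) + q * x * r by ring,
      Int.add_mul_ediv_right _ _ hr.ne']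
  rw [weight, Int.fdiv_eq_ediv_of_nonneg _ hd.le, Int.fdiv_eq_ediv_of_nonneg _ hr.le,
    hdiv_d, hdiv_r]
  linear_combination -Int.mul_ediv_add_emod (q + s) r

lemma ediv_add_emod_eq_one_iff {t r : ℤ} (ht : 0 ≤ t) (hr : 1 < r) :
    t / r + t % r = 1 ↔ t = 1 ∨ t = r := by
  constructor
  · have hdecomp := Int.mul_ediv_add_emod t r
    have hm := Int.ediv_nonneg ht (by omega : (0 : ℤ) ≤ r)
    have hv := Int.emod_nonneg t (by omega : r ≠ 0)
    generalize t / r = m at *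
    generalize t % r = v at *
    intro h
    obtain ⟨rfl, rfl⟩ | ⟨rfl, rfl⟩ : (m = 0 ∧ v = 1) ∨ (m = 1 ∧ v = 0) := by omega
    · left; linarith
    · right; linarith
  · rintro (rfl | rfl)
    · rw [Int.ediv_eq_zero_of_lt zero_le_one hr, Int.emod_eq_of_lt zero_le_one hr, zero_add]
    · rw [Int.ediv_self (by omega), Int.emod_self, add_zero]

lemma weight_mul_add_eq_one_iff {r x q s : ℤ} (hr : 1 < r) (hq : 0 ≤ q) (hs0 : 0 ≤ s)
    (hs : s < 1 + x * r) :
    weight r x ((1 + x * r) * q + s) = 1 ↔ q + s = 1 ∨ q + s = r := by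
  rw [weight_mul_add (by omega) hs0 hs, ediv_add_emod_eq_one_iff (by omega) hr]

lemma filter_weight_eq_one {r x : ℤ} (hr : 2 ≤ r) (hx : 1 ≤ x) :
    (Ico 0 (r * (x * r + 1))).filter (fun b => weight r x b = 1) =
      insert 1 (insert (1 + x * r) ((Ico 0 r).image fun k => (1 + x * r) * k + (r - k))) := by
  have hrd : r < 1 + x * r := by nlinarith
  ext b
  simp only [mem_filter, mem_Ico, mem_insert, mem_image]
  constructor
  · rintro ⟨⟨hb0, hb⟩, hw⟩
    obtain ⟨q, s, rfl, hs0, hs⟩ :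
        ∃ q s, (1 + x * r) * q + s = b ∧ 0 ≤ s ∧ s < 1 + x * r :=
      ⟨b / (1 + x * r), b % (1 + x * r), Int.mul_ediv_add_emod _ _,
        Int.emod_nonneg _ (by linarith), Int.emod_lt_of_pos _ (by linarith)⟩
    have hq0 : 0 ≤ q := by nlinarith
    have hqr : q < r := by nlinarith
    rcases (weight_mul_add_eq_one_iff (by omega) hq0 hs0 hs).1 hw with h | h
    · obtain rfl | rfl : q = 0 ∨ q = 1 := by omega
      · left; linarith
      · right; left; linarith
    · exact Or.inr (Or.inr ⟨q, ⟨hq0, hqr⟩, by rw [← h]; ring⟩)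
  · rintro (rfl | rfl | ⟨k, ⟨hk0, hkr⟩, rfl⟩)
    · refine ⟨⟨zero_le_one, by nlinarith⟩, ?_⟩
      simpa using (weight_mul_add_eq_one_iff (x := x) (by omega) le_rfl zero_le_one
        (by linarith)).2 (Or.inl (zero_add 1))
    · refine ⟨⟨by linarith, by nlinarith⟩, ?_⟩
      simpa using (weight_mul_add_eq_one_iff (by omega) zero_le_one le_rfl
        (by linarith)).2 (Or.inl (add_zero 1))
    · refine ⟨⟨by nlinarith, by nlinarith⟩, ?_⟩
      exact (weight_mul_add_eq_one_iff (by omega) hk0 (by omega) (by linarith)).2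
        (Or.inr (by ring))

theorem stmt_1 (r x : ℤ) (hr : 2 ≤ r) (hx : 1 ≤ x) :
    ((Finset.Ico (0 : ℤ) (r * (x * r + 1))).filter
      (fun b => b - x * (Int.fdiv b (1 + x * r)) - (r - 1) * (Int.fdiv b r) = 1)).card
      = r.toNat + 2 := by
  change ((Ico 0 (r * (x * r + 1))).filter fun b => weight r x b = 1).card = _
  rw [filter_weight_eq_one hr hx]
  set family := (Ico 0 r).image fun k => (1 + x * r) * k + (r - k) with hfamily
  have hxr : r ≤ x * r := by nlinarith
  have hinj : Set.InjOn (fun k => (1 + x * r) * k + (r - k)) (Ico 0 r) := by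
    intro k _ l _ h
    exact mul_left_cancel₀ (by nlinarith : x * r ≠ 0) (by linear_combination h)
  have hd_notMem : 1 + x * r ∉ family := by
    simp only [hfamily, mem_image, mem_Ico, not_exists, not_and]
    rintro k ⟨hk0, hkr⟩ h
    obtain rfl | hk1 : k = 0 ∨ 1 ≤ k := by omega
    · linarith
    · nlinarith
  have hone_notMem : 1 ∉ insert (1 + x * r) family := by
    simp only [hfamily, mem_insert, mem_image, mem_Ico, not_or, not_exists, not_and]
    exact ⟨by linarith, fun k ⟨hk0, _⟩ h => by nlinarith⟩
  rw [card_insert_of_notMem hone_notMem, card_insert_of_notMem hd_notMem,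
    card_image_of_injOn hinj, Int.card_Ico, sub_zero]
end

section
/- Let q = (q₁,…,q_d) ∈ ℤ_{≥1}^d and let Δ_{(1,q)} = conv{e₁,…,e_d, -q} ⊂ ℝ^d. If q = (r₁^{x₁}, (1+r₁x₁)^{r₁-1}) with r₁ ≥ 2 and x₁ ≥ 1 (so d = x₁ + r₁ - 1), then Δ_{(1,q)} equals the set of t ∈ ℝ^d satisfying: for 1 ≤ k ≤ x₁, Σ_{j≠k} t_j - x₁r₁t_k ≤ 1; for x₁+1 ≤ k ≤ d, Σ_{j≠k} t_j - (r₁-1)t_k ≤ 1; and Σ_{j=1}^d t_j ≤ 1. -/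
/-!
The points `e₁, …, e_d, -q` are affinely independent as soon as `1 + ∑ q ≠ 0`, so every `t` has
unique barycentric coordinates: `μ = (1 - ∑ t) / (1 + ∑ q)` on `-q` and `t k + μ q k` on `e_k`.
The simplex is where all of them are nonnegative. For the given `q` one has
`1 + ∑ q = r₁ (1 + r₁ x₁)`, and clearing the positive denominators turns the condition on the
coordinate of `e_k` into the `k`-th facet inequality and the condition on `μ` into `∑ t ≤ 1`.
-/

open Finset

section BasisSimplex

variable {ι : Type*} [Fintype ι] (q : ι → ℝ)

noncomputable def apexWeight (t : ι → ℝ) : ℝ := (1 - ∑ i, t i) / (1 + ∑ i, q i)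

lemma apexWeight_single [DecidableEq ι] (i : ι) : apexWeight q (Pi.single i 1) = 0 := by
  simp [apexWeight]

lemma apexWeight_neg_self (hq : 1 + ∑ i, q i ≠ 0) : apexWeight q (-q) = 1 := by
  simp [apexWeight, sub_neg_eq_add, div_self hq]

lemma apexWeight_smul_add_smul {a b : ℝ} (hab : a + b = 1) (u v : ι → ℝ) :
    apexWeight q (a • u + b • v) = a * apexWeight q u + b * apexWeight q v := by
  simp only [apexWeight, Pi.add_apply, Pi.smul_apply, smul_eq_mul, sum_add_distrib, ← mul_sum]
  rw [← eq_sub_iff_add_eq'] at hab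
  subst hab
  ring

lemma convex_apexWeight_nonneg :
    Convex ℝ {t : ι → ℝ | 0 ≤ apexWeight q t ∧ ∀ k, 0 ≤ t k + apexWeight q t * q k} := by
  rintro u ⟨hu, huk⟩ v ⟨hv, hvk⟩ a b ha hb hab
  simp only [Set.mem_ofPred_eq, apexWeight_smul_add_smul q hab]
  refine ⟨by positivity, fun k => ?_⟩
  have hk : (a • u + b • v) k + (a * apexWeight q u + b * apexWeight q v) * q k =
      a * (u k + apexWeight q u * q k) + b * (v k + apexWeight q v * q k) := by
    simp only [Pi.add_apply, Pi.smul_apply, smul_eq_mul]; ring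
  rw [hk]
  exact add_nonneg (mul_nonneg ha (huk k)) (mul_nonneg hb (hvk k))

theorem convexHull_single_union_neg [DecidableEq ι] (hq : 1 + ∑ i, q i ≠ 0) :
    convexHull ℝ ((Set.range fun i : ι => Pi.single i (1 : ℝ)) ∪ {-q}) =
      {t | 0 ≤ apexWeight q t ∧ ∀ k, 0 ≤ t k + apexWeight q t * q k} := by
  refine (convexHull_min ?_ (convex_apexWeight_nonneg q)).antisymm fun t ⟨hμ, hk⟩ => ?_
  · rintro _ (⟨i, rfl⟩ | rfl)
    · refine ⟨(apexWeight_single q i).ge, fun k => ?_⟩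
      rw [apexWeight_single, zero_mul, add_zero]
      exact (Pi.single_nonneg.2 zero_le_one : (0 : ι → ℝ) ≤ Pi.single i 1) k
    · simp [apexWeight_neg_self q hq]
  · set μ := apexWeight q t
    have hμ_mul : μ * (1 + ∑ i, q i) = 1 - ∑ i, t i := div_mul_cancel₀ _ hq
    refine mem_convexHull_of_exists_fintype (fun o : Option ι => o.elim μ fun k => t k + μ * q k)
      (fun o => o.elim (-q) fun k => Pi.single k 1) (by rintro (_ | k) <;> simp [hμ, hk]) ?_
      (by rintro (_ | k) <;> simp) ?_
    · simp only [Fintype.sum_option, Option.elim, sum_add_distrib, ← mul_sum]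
      linear_combination hμ_mul
    · ext j
      simp [Fintype.sum_option, Pi.single_apply]

theorem convexHull_single_union_neg_of_pos [DecidableEq ι] (hq : 0 < 1 + ∑ i, q i) :
    convexHull ℝ ((Set.range fun i : ι => Pi.single i (1 : ℝ)) ∪ {-q}) =
      {t | ∑ i, t i ≤ 1 ∧ ∀ k, 0 ≤ (1 + ∑ i, q i) * t k + (1 - ∑ i, t i) * q k} := by
  rw [convexHull_single_union_neg q hq.ne']
  ext t
  simp only [Set.mem_ofPred_eq, apexWeight, le_div_iff₀ hq, zero_mul, sub_nonneg]
  refine and_congr_right' (forall_congr' fun k => ?_)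
  rw [← mul_nonneg_iff_of_pos_left hq, mul_add, ← mul_assoc, mul_div_cancel₀ _ hq.ne']

end BasisSimplex

lemma one_add_sum_ite_lt {r x d : ℕ} (hr : 1 ≤ r) (hd : d = x + r - 1) (q : Fin d → ℝ)
    (hq : ∀ j : Fin d, q j = if (j : ℕ) < x then (r : ℝ) else 1 + r * x) :
    1 + ∑ j, q j = r * (1 + r * x) := by
  obtain ⟨m, rfl⟩ : ∃ m, r = m + 1 := ⟨r - 1, by omega⟩
  obtain rfl : d = x + m := by omega
  simp only [hq, Fin.sum_univ_add, Fin.val_castAdd, Fin.is_lt, ↓reduceIte, Fin.val_natAdd,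
    add_lt_iff_neg_left, not_lt_zero, sum_const, card_univ, Fintype.card_fin, nsmul_eq_mul]
  push_cast
  ring

theorem stmt_4_general (r₁ x₁ d : ℕ) (hr : 2 ≤ r₁) (hd : d = x₁ + r₁ - 1)
    (q : Fin d → ℝ)
    (hq : ∀ j : Fin d, q j = if (j : ℕ) < x₁ then (r₁ : ℝ) else 1 + r₁ * x₁) :
    convexHull ℝ ((Set.range fun i : Fin d => Pi.single i (1 : ℝ)) ∪ {-q}) =
      {t : Fin d → ℝ |
        (∀ k : Fin d,
          (∑ j, t j) - t k -
            (if (k : ℕ) < x₁ then (x₁ * r₁ : ℝ) else ((r₁ : ℝ) - 1)) * t k ≤ 1) ∧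
        (∑ j, t j) ≤ 1} := by
  have hr₀ : (0 : ℝ) < r₁ := Nat.cast_pos.2 (by omega)
  have hA : (0 : ℝ) < 1 + r₁ * x₁ := by positivity
  have hsum := one_add_sum_ite_lt (by omega) hd q hq
  rw [convexHull_single_union_neg_of_pos q (hsum ▸ mul_pos hr₀ hA), hsum]
  ext t
  simp only [Set.mem_ofPred_eq, and_comm (b := ∑ j, t j ≤ 1)]
  refine and_congr_right' (forall_congr' fun k => ?_)
  rw [hq k]
  split_ifs
  · rw [← sub_nonneg (a := 1), ← mul_nonneg_iff_of_pos_left hr₀ (b := 1 - _)]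
    ring_nf
  · rw [← sub_nonneg (a := 1), ← mul_nonneg_iff_of_pos_left hA (b := 1 - _)]
    ring_nf

theorem stmt_4 (r₁ x₁ d : ℕ) (hr : 2 ≤ r₁) (hx : 1 ≤ x₁) (hd : d = x₁ + r₁ - 1)
    (q : Fin d → ℝ)
    (hq : ∀ j : Fin d, q j = if (j : ℕ) < x₁ then (r₁ : ℝ) else 1 + r₁ * x₁) :
    convexHull ℝ ((Set.range fun i : Fin d => Pi.single i (1 : ℝ)) ∪ {-q}) =
      {t : Fin d → ℝ |
        (∀ k : Fin d,
          (∑ j, t j) - t k -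
            (if (k : ℕ) < x₁ then (x₁ * r₁ : ℝ) else ((r₁ : ℝ) - 1)) * t k ≤ 1) ∧
        (∑ j, t j) ≤ 1} :=
  stmt_4_general r₁ x₁ d hr hd q hq
end

section
/- Let r₁ ≥ 2, x₁ ≥ 1, d = x₁ + r₁ - 1, q = (r₁^{x₁},(1+r₁x₁)^{r₁-1}), and for 1 ≤ i ≤ r₁ define a'_i = ((-(r₁-i+1))^{x₁}, (-(1+(r₁-i+1)x₁))^{r₁-1}) ∈ ℤ^d. Then each a'_i satisfies all d+1 inequalities of the H-description of Δ_{(1,q)}; in particular, for 2 ≤ i ≤ r₁, λ_k(a'_i) = 1 for x₁+1 ≤ k ≤ d and λ_k(a'_i) < 1 for all other k, and λ_k(a'_1) = 1 for all 1 ≤ k ≤ d with λ_{d+1}(a'_1) < 1. -/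
/-!
Put `c = r₁ - i + 1`, so that `a'_i` takes the value `-c` on the first `x₁` coordinates and
`-(1 + c x₁)` on the remaining `r₁ - 1`. Along this line of points the coordinate sum is
`1 - r₁ - r₁ x₁ c`, from which `λ_k = 1` for `k > x₁` (for every `c`),
`λ_k = 1 - r₁ + c = 2 - i` for `k ≤ x₁`, and `λ_{d+1} < 1` as soon as `c ≥ 0`.
-/

open Finset

theorem Fin.sum_univ_ite_val_lt {M : Type*} [AddCommMonoid M] {d x : ℕ} (h : x ≤ d) (A B : M) :
    ∑ j : Fin d, (if (j : ℕ) < x then A else B) = x • A + (d - x) • B := by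
  rw [Fin.sum_univ_eq_sum_range (fun j => if j < x then A else B), sum_ite, range_eq_Ico,
    Ico_filter_lt]
  simp [Ico_filter_le, h]

/-- The point `a'_i` of the statement is `aPrime d x₁ (r₁ - i + 1)`. -/
def aPrime (d x : ℕ) (c : ℝ) : Fin d → ℝ :=
  fun j => if (j : ℕ) < x then -c else -(1 + c * x)

section aPrime

variable {d r x : ℕ} (hr : 1 ≤ r) (hd : d = x + r - 1) (c : ℝ)
include hr hd

theorem sum_aPrime : ∑ j, aPrime d x c j = 1 - r - r * x * c := by
  have hdx : ((d - x : ℕ) : ℝ) = r - 1 := by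
    rw [show d - x = r - 1 by omega, Nat.cast_sub hr, Nat.cast_one]
  unfold aPrime
  rw [Fin.sum_univ_ite_val_lt (by omega), nsmul_eq_mul, nsmul_eq_mul, hdx]
  ring

theorem sum_aPrime_lt_one (hc : 0 ≤ c) : ∑ j, aPrime d x c j < 1 := by
  have hr' : (1 : ℝ) ≤ r := by exact_mod_cast hr
  rw [sum_aPrime hr hd]
  nlinarith [mul_nonneg (mul_nonneg (Nat.cast_nonneg r) (Nat.cast_nonneg x)) hc]

theorem sum_sub_aPrime_of_lt {k : Fin d} (hk : (k : ℕ) < x) :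
    (∑ j, aPrime d x c j) - aPrime d x c k - (x * r : ℝ) * aPrime d x c k = 1 - r + c := by
  rw [sum_aPrime hr hd, aPrime, if_pos hk]
  ring

theorem sum_sub_aPrime_of_le {k : Fin d} (hk : x ≤ (k : ℕ)) :
    (∑ j, aPrime d x c j) - aPrime d x c k - ((r : ℝ) - 1) * aPrime d x c k = 1 := by
  rw [sum_aPrime hr hd, aPrime, if_neg hk.not_gt]
  ring

end aPrime

theorem stmt_7_general (r₁ x₁ d : ℕ) (hd : d = x₁ + r₁ - 1)
    (lam : Fin d → (Fin d → ℝ) → ℝ)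
    (hlam : ∀ k t, lam k t =
      (∑ j, t j) - t k -
        (if (k : ℕ) < x₁ then (x₁ * r₁ : ℝ) else ((r₁ : ℝ) - 1)) * t k)
    (a : ℕ → Fin d → ℝ)
    (ha : ∀ i (j : Fin d), a i j =
      if (j : ℕ) < x₁ then -((r₁ : ℝ) - i + 1) else -(1 + ((r₁ : ℝ) - i + 1) * x₁)) :
    ∀ i : ℕ, 1 ≤ i → i ≤ r₁ →
      ((∀ k : Fin d, lam k (a i) ≤ 1) ∧ (∑ j, a i j) ≤ 1) ∧
      (2 ≤ i →
        (∀ k : Fin d, x₁ ≤ (k : ℕ) → lam k (a i) = 1) ∧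
        (∀ k : Fin d, (k : ℕ) < x₁ → lam k (a i) < 1) ∧
        (∑ j, a i j) < 1) ∧
      (i = 1 → (∀ k : Fin d, lam k (a i) = 1) ∧ (∑ j, a i j) < 1) := by
  intro i hi hir
  have hr : 1 ≤ r₁ := hi.trans hir
  have hai : a i = aPrime d x₁ ((r₁ : ℝ) - i + 1) := funext (ha i)
  have hi' : (1 : ℝ) ≤ i := by exact_mod_cast hi
  have hir' : (i : ℝ) ≤ r₁ := by exact_mod_cast hir
  have hsum : ∑ j, a i j < 1 :=
    hai ▸ sum_aPrime_lt_one hr hd _ (by linarith)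
  have hlow : ∀ k : Fin d, (k : ℕ) < x₁ → lam k (a i) = 2 - i := fun k hk => by
    rw [hlam, if_pos hk, hai, sum_sub_aPrime_of_lt hr hd _ hk]
    ring
  have hhigh : ∀ k : Fin d, x₁ ≤ (k : ℕ) → lam k (a i) = 1 := fun k hk => by
    rw [hlam, if_neg hk.not_gt, hai, sum_sub_aPrime_of_le hr hd _ hk]
  have hlam_le : ∀ k : Fin d, lam k (a i) ≤ 1 := fun k => by
    rcases lt_or_ge (k : ℕ) x₁ with hk | hk
    · linarith [hlow k hk]
    · exact (hhigh k hk).le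
  refine ⟨⟨hlam_le, hsum.le⟩, fun hi2 => ⟨hhigh, fun k hk => ?_, hsum⟩,
    fun hi1 => ⟨fun k => ?_, hsum⟩⟩
  · have hi2' : (2 : ℝ) ≤ i := by exact_mod_cast hi2
    linarith [hlow k hk]
  · subst hi1
    rcases lt_or_ge (k : ℕ) x₁ with hk | hk
    · rw [hlow k hk]; norm_num
    · exact hhigh k hk

theorem stmt_7 (r₁ x₁ d : ℕ) (hr : 2 ≤ r₁) (hx : 1 ≤ x₁) (hd : d = x₁ + r₁ - 1)
    (lam : Fin d → (Fin d → ℝ) → ℝ)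
    (hlam : ∀ k t, lam k t =
      (∑ j, t j) - t k -
        (if (k : ℕ) < x₁ then (x₁ * r₁ : ℝ) else ((r₁ : ℝ) - 1)) * t k)
    (a : ℕ → Fin d → ℝ)
    (ha : ∀ i (j : Fin d), a i j =
      if (j : ℕ) < x₁ then -((r₁ : ℝ) - i + 1) else -(1 + ((r₁ : ℝ) - i + 1) * x₁)) :
    ∀ i : ℕ, 1 ≤ i → i ≤ r₁ →
      ((∀ k : Fin d, lam k (a i) ≤ 1) ∧ (∑ j, a i j) ≤ 1) ∧
      (2 ≤ i →
        (∀ k : Fin d, x₁ ≤ (k : ℕ) → lam k (a i) = 1) ∧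
        (∀ k : Fin d, (k : ℕ) < x₁ → lam k (a i) < 1) ∧
        (∑ j, a i j) < 1) ∧
      (i = 1 → (∀ k : Fin d, lam k (a i) = 1) ∧ (∑ j, a i j) < 1) :=
  stmt_7_general r₁ x₁ d hd lam hlam a ha
end

section
/- Let r₁ ≥ 2, x₁ ≥ 1, d = x₁ + r₁ - 1, q = (r₁^{x₁},(1+r₁x₁)^{r₁-1}). The set of lattice points of Δ_{(1,q)} is exactly A' = {a'_1,…,a'_{r₁+3}} ∪ {e₁,…,e_d}, where a'_i = ((-(r₁-i+1))^{x₁},(-(1+(r₁-i+1)x₁))^{r₁-1}) for 1 ≤ i ≤ r₁, a'_{r₁+1} = ((-1)^{x₁},(-x₁)^{r₁-1}), a'_{r₁+2} = (0^{x₁},(-1)^{r₁-1}), and a'_{r₁+3} = 0. -/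
/-!
For `q ≥ 0` the points `-q, e₁, …, e_d` are affinely independent, and `p` lies in their hull iff
its barycentric coordinates `t / N` and `p j + (t / N) * q j` are nonnegative, where
`t = 1 - ∑ p` and `N = 1 + ∑ q`. For the given `q` one has `N = r (1 + r x)`, so an integer point
with `t ≥ 1` satisfies `p j ≥ -⌊t / (1 + r x)⌋` on the first `x` coordinates and `p j ≥ -⌊t / r⌋`
on the others. Summing gives `t ≤ 1 + x ⌊t / (1 + r x)⌋ + (r - 1) ⌊t / r⌋`, and floor arithmetic
shows that this forces equality, hence equality in every coordinate bound, and leaves exactly the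
`r + 3` pairs of floors realised by the points `a'_i`. The integer points with `t = 0` are the
nonnegative ones with coordinate sum `1`, i.e. the `e_j`.
-/

open Finset

lemma exists_single_eq_of_nonneg_of_sum_eq_one {ι : Type*} [Fintype ι] [DecidableEq ι]
    {p : ι → ℤ} (hp : 0 ≤ p) (hsum : ∑ j, p j = 1) : ∃ i, Pi.single i 1 = p := by
  obtain ⟨i, -, hi⟩ := exists_ne_zero_of_sum_ne_zero (hsum.trans_ne one_ne_zero)
  have hrest : ∑ j ∈ univ.erase i, p j = 1 - p i := by
    rw [← hsum, ← sum_erase_add _ _ (mem_univ i), add_sub_cancel_right]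
  have hpi : p i = 1 := by
    have := sum_nonneg fun j (_ : j ∈ univ.erase i) => hp j
    have : 0 ≤ p i := hp i
    omega
  have hzero := (sum_eq_zero_iff_of_nonneg fun j _ => hp j).1 (by rw [hrest, hpi, sub_self])
  refine ⟨i, funext fun j => ?_⟩
  rcases eq_or_ne j i with rfl | hji
  · rw [Pi.single_eq_same, hpi]
  · rw [Pi.single_eq_of_ne hji, hzero j (mem_erase.2 ⟨hji, mem_univ j⟩)]

section Barycentric

variable {ι : Type*} [Fintype ι] [DecidableEq ι]

def simplexVertex (q : ι → ℝ) : Option ι → ι → ℝ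
  | none => -q
  | some i => Pi.single i 1

-- Barycentric coordinates with respect to `simplexVertex q`, cf. `sum_baryCoord_smul`.
noncomputable def baryCoord (q p : ι → ℝ) : Option ι → ℝ
  | none => (1 - ∑ j, p j) / (1 + ∑ j, q j)
  | some i => p i + (1 - ∑ j, p j) / (1 + ∑ j, q j) * q i

omit [Fintype ι] in
lemma range_simplexVertex (q : ι → ℝ) :
    Set.range (simplexVertex q) = Set.range (fun i => Pi.single i 1) ∪ {-q} := by
  ext v
  simp [simplexVertex, Option.exists, eq_comm]

omit [DecidableEq ι] in
lemma one_add_sum_pos {q : ι → ℝ} (hq : 0 ≤ q) : 0 < 1 + ∑ j, q j := by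
  have := sum_nonneg fun j (_ : j ∈ univ) => hq j
  linarith

omit [DecidableEq ι] in
lemma sum_baryCoord {q : ι → ℝ} (hq : 0 ≤ q) (p : ι → ℝ) : ∑ o, baryCoord q p o = 1 := by
  have := (one_add_sum_pos hq).ne'
  simp only [Fintype.sum_option, baryCoord, sum_add_distrib, ← mul_sum]
  field_simp
  ring

lemma sum_baryCoord_smul (q p : ι → ℝ) : ∑ o, baryCoord q p o • simplexVertex q o = p := by
  ext j
  simp [Fintype.sum_option, baryCoord, simplexVertex, Finset.sum_apply, Pi.single_apply]

omit [DecidableEq ι] in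
lemma baryCoord_add_smul (q : ι → ℝ) {x y : ι → ℝ} {a b : ℝ} (hab : a + b = 1) (o : Option ι) :
    baryCoord q (a • x + b • y) o = a * baryCoord q x o + b * baryCoord q y o := by
  obtain rfl : b = 1 - a := by linarith
  have hs : ∑ j, (a • x + (1 - a) • y) j = a * ∑ j, x j + (1 - a) * ∑ j, y j := by
    simp [sum_add_distrib, mul_sum]
  cases o
  · simp only [baryCoord, hs]
    ring
  · simp only [baryCoord]
    rw [hs]
    simp only [Pi.add_apply, Pi.smul_apply, smul_eq_mul]
    ring

lemma baryCoord_simplexVertex {q : ι → ℝ} (hq : 0 ≤ q) (o : Option ι) :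
    baryCoord q (simplexVertex q o) = Pi.single o 1 := by
  have := (one_add_sum_pos hq).ne'
  ext o'
  cases o <;> cases o' <;> simp [baryCoord, simplexVertex, Pi.single_apply, sum_neg_distrib, this]

lemma mem_convexHull_simplexVertex_iff {q : ι → ℝ} (hq : 0 ≤ q) (p : ι → ℝ) :
    p ∈ convexHull ℝ (Set.range (simplexVertex q)) ↔ ∀ o, 0 ≤ baryCoord q p o := by
  constructor
  · refine fun hp => convexHull_min (t := {p | ∀ o, 0 ≤ baryCoord q p o}) ?_ ?_ hp
    · rintro _ ⟨o, rfl⟩ o'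
      rw [baryCoord_simplexVertex hq]
      exact (Pi.single_nonneg.2 zero_le_one : (0 : Option ι → ℝ) ≤ Pi.single o 1) o'
    · intro x hx y hy a b ha hb hab o
      rw [baryCoord_add_smul q hab]
      exact add_nonneg (mul_nonneg ha (hx o)) (mul_nonneg hb (hy o))
  · intro hw
    exact mem_convexHull_of_exists_fintype _ _ hw (sum_baryCoord hq p) Set.mem_range_self
      (sum_baryCoord_smul q p)

lemma mem_convexHull_single_union_neg_iff {q : ι → ℝ} (hq : 0 ≤ q) (p : ι → ℝ) :
    p ∈ convexHull ℝ (Set.range (fun i => Pi.single i 1) ∪ {-q}) ↔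
      ∑ j, p j ≤ 1 ∧ ∀ j, 0 ≤ (1 + ∑ k, q k) * p j + q j * (1 - ∑ k, p k) := by
  have hN := one_add_sum_pos hq
  rw [← range_simplexVertex, mem_convexHull_simplexVertex_iff hq, Option.forall]
  refine and_congr (by rw [baryCoord, le_div_iff₀ hN, zero_mul, sub_nonneg])
    (forall_congr' fun j => ?_)
  rw [baryCoord, ← mul_nonneg_iff_of_pos_left hN]
  congr! 1
  field_simp

lemma intCast_mem_convexHull_iff {q : ι → ℤ} (hq : 0 ≤ q) (p : ι → ℤ) :
    (fun j => (p j : ℝ)) ∈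
        convexHull ℝ ((Set.range fun i => Pi.single i (1 : ℝ)) ∪ {fun j => -(q j : ℝ)}) ↔
      ∑ j, p j ≤ 1 ∧ ∀ j, 0 ≤ (1 + ∑ k, q k) * p j + q j * (1 - ∑ k, p k) := by
  rw [← Pi.neg_def, mem_convexHull_single_union_neg_iff fun j => Int.cast_nonneg (hq j)]
  norm_cast

end Barycentric

def blockVec {α : Type*} {d : ℕ} (x : ℕ) (c c' : α) : Fin d → α :=
  fun j => if (j : ℕ) < x then c else c'

lemma sum_blockVec {M : Type*} [AddCommMonoid M] {d x : ℕ} (hx : x ≤ d) (c c' : M) :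
    ∑ j, blockVec (d := d) x c c' j = x • c + (d - x) • c' := by
  unfold blockVec
  rw [Fin.sum_univ_eq_sum_range (fun j => if j < x then c else c') d,
    ← sum_range_add_sum_Ico _ hx, sum_congr rfl fun j hj => if_pos (mem_range.1 hj),
    sum_congr rfl fun j hj => if_neg (not_lt.2 (mem_Ico.1 hj).1)]
  simp

def Admissible (r x A U : ℤ) : Prop :=
  0 ≤ A ∧ (U = x * A + 1 ∧ A ≤ r ∨ U = x * A ∧ A ≤ 1)

lemma admissible_ediv_of_le {r x t : ℤ} (hr : 0 < r) (hx : 0 ≤ x) (ht : 0 < t)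
    (h : t ≤ 1 + x * (t / (1 + r * x)) + (r - 1) * (t / r)) :
    Admissible r x (t / (1 + r * x)) (t / r) ∧
      t = 1 + x * (t / (1 + r * x)) + (r - 1) * (t / r) := by
  have hM : 0 < 1 + r * x := by nlinarith
  have hAM := Int.ediv_mul_le t hM.ne'
  have hUr := Int.ediv_mul_le t hr.ne'
  have hUr' := Int.lt_ediv_add_one_mul_self t hr
  have hA := Int.ediv_nonneg ht.le hM.le
  generalize t / (1 + r * x) = A at *
  generalize t / r = U at *
  have hXU : x * A ≤ U := by
    by_contra! hlt
    nlinarith [mul_le_mul_of_nonneg_left (show U + 1 ≤ x * A by omega) hr.le]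
  have hUX : U ≤ x * A + 1 := by nlinarith
  rcases (by omega : U = x * A + 1 ∨ U = x * A) with rfl | rfl
  · exact ⟨⟨hA, .inl ⟨rfl, by nlinarith⟩⟩, by nlinarith⟩
  · have hA1 : A ≤ 1 := by nlinarith
    refine ⟨⟨hA, .inr ⟨rfl, hA1⟩⟩, ?_⟩
    obtain rfl | rfl : A = 0 ∨ A = 1 := by omega
    · simp only [mul_zero] at *; omega
    · nlinarith

section Lattice

variable {r x d : ℕ}

lemma sum_blockVec_int (hd : d = x + r - 1) (hr : 1 ≤ r) (c c' : ℤ) :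
    ∑ j, blockVec (d := d) x c c' j = x * c + (r - 1) * c' := by
  rw [sum_blockVec (by omega), nsmul_eq_mul, nsmul_eq_mul, show d - x = r - 1 by omega,
    Nat.cast_sub hr, Nat.cast_one]

-- The inequalities of `intCast_mem_convexHull_iff` for `q = blockVec x r (1 + r * x)`, where
-- `1 + ∑ q = r * (1 + r * x)`, divided by `q j`.
def LatticeIneqs (r x : ℕ) (p : Fin d → ℤ) : Prop :=
  ∑ j, p j ≤ 1 ∧ ∀ j, 0 ≤ blockVec x (1 + (r : ℤ) * x) (r : ℤ) j * p j + (1 - ∑ k, p k)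

lemma intCast_mem_convexHull_blockVec_iff (hd : d = x + r - 1) (hr : 1 ≤ r) (p : Fin d → ℤ) :
    (fun j => (p j : ℝ)) ∈ convexHull ℝ ((Set.range fun i => Pi.single i (1 : ℝ)) ∪
        {fun j => -((blockVec x (r : ℤ) (1 + r * x) j : ℤ) : ℝ)}) ↔ LatticeIneqs r x p := by
  have hr' : (0 : ℤ) < r := by omega
  have hN : 1 + ∑ k, blockVec (d := d) x (r : ℤ) (1 + r * x) k = r * (1 + r * x) := by
    rw [sum_blockVec_int hd hr]
    ring
  rw [intCast_mem_convexHull_iff (fun j => by unfold blockVec; split_ifs <;> positivity), hN]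
  refine and_congr_right fun _ => forall_congr' fun j => ?_
  unfold blockVec
  split_ifs
  · rw [show (r : ℤ) * (1 + r * x) * p j + r * (1 - ∑ k, p k) =
      r * ((1 + r * x) * p j + (1 - ∑ k, p k)) by ring]
    exact mul_nonneg_iff_of_pos_left hr'
  · rw [show (r : ℤ) * (1 + r * x) * p j + (1 + r * x) * (1 - ∑ k, p k) =
      (1 + r * x) * (r * p j + (1 - ∑ k, p k)) by ring]
    exact mul_nonneg_iff_of_pos_left (by positivity)

lemma latticeIneqs_single (j : Fin d) : LatticeIneqs r x (Pi.single j 1) := by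
  refine ⟨by simp, fun k => ?_⟩
  rw [sum_pi_single', if_pos (mem_univ j), sub_self, add_zero]
  exact mul_nonneg (by unfold blockVec; split_ifs <;> positivity)
    ((Pi.single_nonneg.2 zero_le_one : (0 : Fin d → ℤ) ≤ Pi.single j 1) k)

lemma exists_single_eq_of_latticeIneqs {p : Fin d → ℤ} (hr : 1 ≤ r) (h : LatticeIneqs r x p)
    (hp : ∑ j, p j = 1) : ∃ i, Pi.single i 1 = p := by
  refine exists_single_eq_of_nonneg_of_sum_eq_one (fun j => ?_) hp
  have hj := h.2 j
  rw [hp, sub_self, add_zero] at hj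
  refine nonneg_of_mul_nonneg_right hj ?_
  unfold blockVec
  split_ifs <;> positivity

lemma exists_admissible_of_latticeIneqs (hd : d = x + r - 1) (hr : 1 ≤ r) {p : Fin d → ℤ}
    (h : LatticeIneqs r x p) (hp : ∑ j, p j < 1) :
    ∃ A U, Admissible r x A U ∧ p = blockVec x (-A) (-U) := by
  set t := 1 - ∑ j, p j
  have hr' : (0 : ℤ) < r := by omega
  have hM : (0 : ℤ) < 1 + r * x := by positivity
  set g : Fin d → ℤ := blockVec x (-(t / (1 + r * x))) (-(t / r))
  have hgp : ∀ j, g j ≤ p j := by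
    intro j
    have hj := h.2 j
    simp only [g, blockVec] at hj ⊢
    split_ifs at hj ⊢
    · exact neg_le.1 (Int.le_ediv_of_mul_le hM (by linarith))
    · exact neg_le.1 (Int.le_ediv_of_mul_le hr' (by linarith))
  have hsum : ∑ j, g j = -(x * (t / (1 + r * x))) - (r - 1) * (t / r) := by
    rw [sum_blockVec_int hd hr]
    ring
  have hgp_sum : ∑ j, g j ≤ ∑ j, p j := sum_le_sum fun j _ => hgp j
  obtain ⟨hadm, heq⟩ :=
    admissible_ediv_of_le (t := t) hr' (Nat.cast_nonneg x) (by omega) (by linarith)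
  refine ⟨_, _, hadm, funext fun j => ?_⟩
  exact ((sum_eq_sum_iff_of_le fun j _ => hgp j).1 (by linarith) j (mem_univ j)).symm

lemma latticeIneqs_blockVec (hd : d = x + r - 1) (hr : 1 ≤ r) {A U : ℤ}
    (h : Admissible r x A U) : LatticeIneqs r x (blockVec (d := d) x (-A) (-U)) := by
  have hx : (0 : ℤ) ≤ x := Nat.cast_nonneg x
  have hr' : (1 : ℤ) ≤ r := by exact_mod_cast hr
  rw [LatticeIneqs, sum_blockVec_int hd hr]
  obtain ⟨hA, ⟨rfl, hAr⟩ | ⟨rfl, hA1⟩⟩ := h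
  all_goals
    have hxA : 0 ≤ (x : ℤ) * A := mul_nonneg hx hA
    have := mul_nonneg (sub_nonneg.2 hr') hxA
    refine ⟨by nlinarith, fun j => ?_⟩
    unfold blockVec
    split_ifs <;> nlinarith

end Lattice

-- `a'_i = blockVec x (-A) (-U)` for `(A, U) = vertexDepth r x i`.
def vertexDepth (r x i : ℕ) : ℤ × ℤ :=
  if i ≤ r then ((r : ℤ) - i + 1, 1 + ((r : ℤ) - i + 1) * x)
  else if i = r + 1 then (1, x) else if i = r + 2 then (0, 1) else (0, 0)

lemma admissible_iff_exists_vertexDepth {r x : ℕ} {A U : ℤ} :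
    Admissible r x A U ↔ ∃ i ∈ Set.Icc 1 (r + 3), vertexDepth r x i = (A, U) := by
  constructor
  · rintro ⟨hA, ⟨rfl, hAr⟩ | ⟨rfl, hA1⟩⟩
    · rcases hA.eq_or_lt with rfl | hA
      · exact ⟨r + 2, by simp, by simp [vertexDepth]⟩
      · have hi : ((r + 1 - A.toNat : ℕ) : ℤ) = r + 1 - A := by omega
        refine ⟨r + 1 - A.toNat, Set.mem_Icc.2 ⟨by omega, by omega⟩, ?_⟩
        rw [vertexDepth, if_pos (by omega), hi]
        ext <;> ring
    · obtain rfl | rfl : A = 0 ∨ A = 1 := by omega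
      · exact ⟨r + 3, by simp, by simp [vertexDepth]⟩
      · exact ⟨r + 1, by simp, by simp [vertexDepth]⟩
  · rintro ⟨i, ⟨hi1, -⟩, hi⟩
    unfold vertexDepth at hi
    split_ifs at hi <;> obtain ⟨rfl, rfl⟩ := Prod.mk.inj hi
    · exact ⟨by omega, .inl ⟨by ring, by omega⟩⟩
    · exact ⟨zero_le_one, .inr ⟨(mul_one _).symm, le_rfl⟩⟩
    · exact ⟨le_rfl, .inl ⟨by ring, by positivity⟩⟩
    · exact ⟨le_rfl, .inr ⟨(mul_zero _).symm, zero_le_one⟩⟩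

theorem stmt_10_general (r₁ x₁ d : ℕ) (hr : 2 ≤ r₁) (hd : d = x₁ + r₁ - 1)
    (q : Fin d → ℤ)
    (hq : ∀ j : Fin d, q j = if (j : ℕ) < x₁ then (r₁ : ℤ) else 1 + r₁ * x₁)
    (a : ℕ → Fin d → ℤ)
    (ha : ∀ i (j : Fin d), a i j =
      if i ≤ r₁ then
        (if (j : ℕ) < x₁ then -((r₁ : ℤ) - i + 1) else -(1 + ((r₁ : ℤ) - i + 1) * x₁))
      else if i = r₁ + 1 then (if (j : ℕ) < x₁ then -1 else -(x₁ : ℤ))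
      else if i = r₁ + 2 then (if (j : ℕ) < x₁ then 0 else -1)
      else 0) :
    {p : Fin d → ℤ |
        (fun j => (p j : ℝ)) ∈
          convexHull ℝ
            ((Set.range fun i : Fin d => Pi.single i (1 : ℝ)) ∪
              {fun j => -(q j : ℝ)})} =
      (a '' Set.Icc 1 (r₁ + 3)) ∪ (Set.range fun j : Fin d => Pi.single j (1 : ℤ)) := by
  have hr₁ : 1 ≤ r₁ := by omega
  obtain rfl : q = blockVec x₁ (r₁ : ℤ) (1 + r₁ * x₁) := funext hq
  have ha' : ∀ i, a i = blockVec x₁ (-(vertexDepth r₁ x₁ i).1) (-(vertexDepth r₁ x₁ i).2) := by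
    intro i
    funext j
    rw [ha]
    unfold vertexDepth blockVec
    split_ifs <;> simp
  ext p
  rw [Set.mem_ofPred_eq, intCast_mem_convexHull_blockVec_iff hd hr₁]
  constructor
  · intro h
    rcases h.1.lt_or_eq with hlt | heq
    · obtain ⟨A, U, hadm, rfl⟩ := exists_admissible_of_latticeIneqs hd hr₁ h hlt
      obtain ⟨i, hi, hdepth⟩ := admissible_iff_exists_vertexDepth.1 hadm
      exact .inl ⟨i, hi, by rw [ha', hdepth]⟩
    · exact .inr (exists_single_eq_of_latticeIneqs hr₁ h heq)
  · rintro (⟨i, hi, rfl⟩ | ⟨j, rfl⟩)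
    · rw [ha']
      exact latticeIneqs_blockVec hd hr₁ (admissible_iff_exists_vertexDepth.2 ⟨i, hi, rfl⟩)
    · exact latticeIneqs_single j

theorem stmt_10 (r₁ x₁ d : ℕ) (hr : 2 ≤ r₁) (hx : 1 ≤ x₁) (hd : d = x₁ + r₁ - 1)
    (q : Fin d → ℤ)
    (hq : ∀ j : Fin d, q j = if (j : ℕ) < x₁ then (r₁ : ℤ) else 1 + r₁ * x₁)
    (a : ℕ → Fin d → ℤ)
    (ha : ∀ i (j : Fin d), a i j =
      if i ≤ r₁ then
        (if (j : ℕ) < x₁ then -((r₁ : ℤ) - i + 1) else -(1 + ((r₁ : ℤ) - i + 1) * x₁))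
      else if i = r₁ + 1 then (if (j : ℕ) < x₁ then -1 else -(x₁ : ℤ))
      else if i = r₁ + 2 then (if (j : ℕ) < x₁ then 0 else -1)
      else 0) :
    {p : Fin d → ℤ |
        (fun j => (p j : ℝ)) ∈
          convexHull ℝ
            ((Set.range fun i : Fin d => Pi.single i (1 : ℝ)) ∪
              {fun j => -(q j : ℝ)})} =
      (a '' Set.Icc 1 (r₁ + 3)) ∪ (Set.range fun j : Fin d => Pi.single j (1 : ℤ)) :=
  stmt_10_general r₁ x₁ d hr hd q hq a ha
end

section
/- Let r₁ ≥ 2 and x₁ ≥ 1. For every vector q of the form (r₁^{x₁}, r₂^{x₂}) with r₂ = 1 + r₁x₁ and x₂ = r₁ - 1, each entry q_i of q divides 1 + Σ_j q_j; i.e., the simplex Δ_{(1,q)} is reflexive. -/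
/-! The entries sum to `x₁ r₁ + (r₁ - 1) r₂ = r₁ r₂ - 1`, so `1 + ∑ q = r₁ r₂`,
which both `r₁` and `r₂` divide. -/

theorem Fin.sum_ite_val_lt {M : Type*} [AddCommMonoid M] {d k : ℕ} (hk : k ≤ d) (a b : M) :
    ∑ j : Fin d, (if (j : ℕ) < k then a else b) = k • a + (d - k) • b := by
  obtain ⟨m, rfl⟩ := Nat.exists_eq_add_of_le hk
  rw [Fin.sum_univ_eq_sum_range (fun i => if i < k then a else b), Finset.sum_range_add,
    Finset.sum_congr rfl fun i hi => if_pos (Finset.mem_range.mp hi),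
    Finset.sum_congr rfl fun i _ => if_neg (by omega)]
  simp

theorem stmt_11_general (r₁ x₁ d : ℕ) (hr : 2 ≤ r₁) (hd : d = x₁ + r₁ - 1)
    (q : Fin d → ℤ)
    (hq : ∀ j : Fin d, q j = if (j : ℕ) < x₁ then (r₁ : ℤ) else 1 + r₁ * x₁) :
    ∀ i : Fin d, q i ∣ 1 + ∑ j, q j := by
  have hsum : 1 + ∑ j, q j = r₁ * (1 + r₁ * x₁) := by
    rw [Finset.sum_congr rfl fun j _ => hq j, Fin.sum_ite_val_lt (by omega)]
    obtain ⟨r, rfl⟩ : ∃ r, r₁ = r + 1 := ⟨r₁ - 1, by omega⟩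
    rw [show d - x₁ = r by omega]
    push_cast [nsmul_eq_mul]
    ring
  intro i
  rw [hsum, hq i]
  split
  · exact dvd_mul_right _ _
  · exact dvd_mul_left _ _

theorem stmt_11 (r₁ x₁ d : ℕ) (hr : 2 ≤ r₁) (hx : 1 ≤ x₁) (hd : d = x₁ + r₁ - 1)
    (q : Fin d → ℤ)
    (hq : ∀ j : Fin d, q j = if (j : ℕ) < x₁ then (r₁ : ℤ) else 1 + r₁ * x₁) :
    ∀ i : Fin d, q i ∣ 1 + ∑ j, q j :=
  stmt_11_general r₁ x₁ d hr hd q hq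
end

section
/- Let r₁ ≥ 2, x₁ ≥ 1, d = x₁+r₁-1. For 0 ≤ k ≤ r₁-1 with additionally k ≤ x₁+1, the identity a'_{r₁-k} + Σ_{ℓ=r₁}^{d} e_{d-ℓ+1} = k·a'_{r₁} + (x₁+1-k)·a'_{r₁+2} holds in ℤ^d, where a'_{r₁-k} = ((-(k+1))^{x₁},(-(1+(k+1)x₁))^{r₁-1}), a'_{r₁} = ((-1)^{x₁},(-(1+x₁))^{r₁-1}), and a'_{r₁+2} = (0^{x₁},(-1)^{r₁-1}). -/
/-! Coordinatewise: the reflected basis vectors `e_{d-ℓ+1}`, `r₁ ≤ ℓ ≤ d`, are exactly the first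
`x₁` unit vectors, and `a'_i` is affine in `i`, so both sides agree on the first `x₁` coordinates
(value `-k`) and on the last `r₁ - 1` (value `-(1 + (k + 1) x₁)`). -/

open Finset

theorem sum_Icc_ite_sub_add_one_eq (r d j : ℕ) (hj : j ≤ d) :
    ∑ ℓ ∈ Icc r d, (if j + 1 = d - ℓ + 1 then (1 : ℤ) else 0) = if j + r ≤ d then 1 else 0 := by
  have hreflect : ∀ ℓ ∈ Icc r d,
      (if j + 1 = d - ℓ + 1 then (1 : ℤ) else 0) = if d - j = ℓ then 1 else 0 := by
    intro ℓ hℓ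
    rw [mem_Icc] at hℓ
    congr 1
    simp only [eq_iff_iff]
    omega
  rw [sum_congr rfl hreflect, sum_ite_eq]
  simp only [mem_Icc]
  omega

theorem stmt_15_general (r₁ x₁ d : ℕ) (hd : d = x₁ + r₁ - 1)
    (a : ℕ → Fin d → ℤ)
    (ha : ∀ i (j : Fin d), a i j =
      if (j : ℕ) < x₁ then -((r₁ : ℤ) - i + 1) else -(1 + ((r₁ : ℤ) - i + 1) * x₁))
    (v : Fin d → ℤ) (hv : ∀ j : Fin d, v j = if (j : ℕ) < x₁ then 0 else -1)
    (e : ℕ → Fin d → ℤ) (he : ∀ m (j : Fin d), e m j = if (j : ℕ) + 1 = m then 1 else 0) :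
    ∀ k : ℕ, k ≤ r₁ - 1 → k ≤ x₁ + 1 →
      a (r₁ - k) + ∑ ℓ ∈ Finset.Icc r₁ d, e (d - ℓ + 1)
        = (k : ℤ) • a r₁ + ((x₁ : ℤ) + 1 - k) • v := by
  intro k hk _
  funext j
  have hsum : ∑ ℓ ∈ Icc r₁ d, e (d - ℓ + 1) j = if (j : ℕ) < x₁ then 1 else 0 := by
    simp only [he]
    rw [sum_Icc_ite_sub_add_one_eq r₁ d j j.isLt.le]
    congr 1
    simp only [eq_iff_iff]
    omega
  have hcast : ((r₁ - k : ℕ) : ℤ) = r₁ - k := by omega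
  simp only [Pi.add_apply, Finset.sum_apply, Pi.smul_apply, smul_eq_mul, hsum, ha, hv, hcast]
  split_ifs <;> ring

theorem stmt_15 (r₁ x₁ d : ℕ) (hr : 2 ≤ r₁) (hx : 1 ≤ x₁) (hd : d = x₁ + r₁ - 1)
    (a : ℕ → Fin d → ℤ)
    (ha : ∀ i (j : Fin d), a i j =
      if (j : ℕ) < x₁ then -((r₁ : ℤ) - i + 1) else -(1 + ((r₁ : ℤ) - i + 1) * x₁))
    (v : Fin d → ℤ) (hv : ∀ j : Fin d, v j = if (j : ℕ) < x₁ then 0 else -1)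
    (e : ℕ → Fin d → ℤ) (he : ∀ m (j : Fin d), e m j = if (j : ℕ) + 1 = m then 1 else 0) :
    ∀ k : ℕ, k ≤ r₁ - 1 → k ≤ x₁ + 1 →
      a (r₁ - k) + ∑ ℓ ∈ Finset.Icc r₁ d, e (d - ℓ + 1)
        = (k : ℤ) • a r₁ + ((x₁ : ℤ) + 1 - k) • v :=
  stmt_15_general r₁ x₁ d hd a ha v hv e he
end

section
/- Let r₁ ≥ 2, x₁ ≥ 1 with x₁ < r₁ - 2, and d = x₁+r₁-1. For x₁+2 ≤ k ≤ r₁-1, the identity a'_{r₁-k} + Σ_{ℓ=r₁}^{d} e_{d-ℓ+1} = (k-x₁-1)·a'_{r₁-1} + (2x₁+2-k)·a'_{r₁} holds in ℤ^d, where a'_i = ((-(r₁-i+1))^{x₁},(-(1+(r₁-i+1)x₁))^{r₁-1}) for 1 ≤ i ≤ r₁. -/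
open Finset

theorem sum_Icc_basis_sub_add_one {R : Type*} [AddCommMonoidWithOne R] {d : ℕ}
    (e : ℕ → Fin d → R) (he : ∀ m (j : Fin d), e m j = if (j : ℕ) + 1 = m then 1 else 0)
    (r : ℕ) :
    ∑ ℓ ∈ Icc r d, e (d - ℓ + 1) = fun j : Fin d => if (j : ℕ) + r ≤ d then (1 : R) else 0 := by
  funext j
  have hj : (j : ℕ) < d := j.isLt
  have hsupport : ∀ ℓ ∈ Icc r d,
      e (d - ℓ + 1) j = if ℓ = d - (j : ℕ) then 1 else 0 := by
    intro ℓ hℓ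
    rw [mem_Icc] at hℓ
    rw [he]
    exact if_congr (by omega) rfl rfl
  rw [Finset.sum_apply, sum_congr rfl hsupport, sum_ite_eq']
  exact if_congr (by rw [mem_Icc]; omega) rfl rfl

theorem stmt_18_general (r₁ x₁ d : ℕ)
    (hd : d = x₁ + r₁ - 1)
    (a : ℕ → Fin d → ℤ)
    (ha : ∀ i (j : Fin d), a i j =
      if (j : ℕ) < x₁ then -((r₁ : ℤ) - i + 1) else -(1 + ((r₁ : ℤ) - i + 1) * x₁))
    (e : ℕ → Fin d → ℤ) (he : ∀ m (j : Fin d), e m j = if (j : ℕ) + 1 = m then 1 else 0) :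
    ∀ k : ℕ, x₁ + 2 ≤ k → k ≤ r₁ - 1 →
      a (r₁ - k) + ∑ ℓ ∈ Finset.Icc r₁ d, e (d - ℓ + 1)
        = ((k : ℤ) - x₁ - 1) • a (r₁ - 1) + (2 * (x₁ : ℤ) + 2 - k) • a r₁ := by
  intro k hk hkr
  rw [sum_Icc_basis_sub_add_one e he]
  funext j
  have hlow : (j : ℕ) + r₁ ≤ d ↔ (j : ℕ) < x₁ := by omega
  simp only [Pi.add_apply, Pi.smul_apply, smul_eq_mul, ha, hlow]
  rw [Nat.cast_sub (by omega : k ≤ r₁), Nat.cast_sub (by omega : 1 ≤ r₁)]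
  split_ifs <;> ring

theorem stmt_18 (r₁ x₁ d : ℕ) (hr : 2 ≤ r₁) (hx : 1 ≤ x₁) (hxr : x₁ < r₁ - 2)
    (hd : d = x₁ + r₁ - 1)
    (a : ℕ → Fin d → ℤ)
    (ha : ∀ i (j : Fin d), a i j =
      if (j : ℕ) < x₁ then -((r₁ : ℤ) - i + 1) else -(1 + ((r₁ : ℤ) - i + 1) * x₁))
    (e : ℕ → Fin d → ℤ) (he : ∀ m (j : Fin d), e m j = if (j : ℕ) + 1 = m then 1 else 0) :
    ∀ k : ℕ, x₁ + 2 ≤ k → k ≤ r₁ - 1 →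
      a (r₁ - k) + ∑ ℓ ∈ Finset.Icc r₁ d, e (d - ℓ + 1)
        = ((k : ℤ) - x₁ - 1) • a (r₁ - 1) + (2 * (x₁ : ℤ) + 2 - k) • a r₁ :=
  stmt_18_general r₁ x₁ d hd a ha e he
end

section
/- Let r ≥ 2 and x ≥ 1 and set N = r(xr+1). Writing each b ∈ {0,…,N-1} uniquely as b = α(1+xr)+β with 0 ≤ α < r, 0 ≤ β < 1+xr, the function w(b) = α + β - (r-1)⌊(α+β)/r⌋ satisfies w(0) = 0 and w(b) ≥ 1 for all 1 ≤ b ≤ N-1. -/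
/-! Since `n = n.fmod r + r * n.fdiv r`, the weight `n - (r - 1) * n.fdiv r` equals
`n.fdiv r + n.fmod r`, a sum of two nonnegative terms that vanish together only when `n = 0`.
It remains to note that `b = α (1 + x r) + β` vanishes exactly when `α + β` does. -/

theorem Int.sub_pred_mul_fdiv_eq (n r : ℤ) : n - (r - 1) * n.fdiv r = n.fdiv r + n.fmod r := by
  linarith [Int.fmod_add_mul_fdiv n r]

theorem Int.fdiv_add_fmod_pos {n r : ℤ} (hr : 0 ≤ r) (hn : 0 < n) : 0 < n.fdiv r + n.fmod r := by
  have hq : 0 ≤ n.fdiv r := Int.fdiv_nonneg hn.le hr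
  have hm : 0 ≤ n.fmod r := Int.fmod_nonneg hn.le hr
  have hsum : n.fmod r + r * n.fdiv r = n := Int.fmod_add_mul_fdiv n r
  rcases hq.eq_or_lt with hq0 | hq0
  · rw [← hq0, mul_zero, add_zero] at hsum
    omega
  · omega

theorem Int.mul_add_eq_zero_iff_of_lt {α β m : ℤ} (hα : 0 ≤ α) (hβ : 0 ≤ β) (hβm : β < m) :
    α * m + β = 0 ↔ α = 0 ∧ β = 0 := by
  constructor
  · intro h
    have hαm : 0 ≤ α * m := mul_nonneg hα (by omega)
    have hβ0 : β = 0 := by omega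
    refine ⟨?_, hβ0⟩
    rcases mul_eq_zero.mp (by omega : α * m = 0) with h | h <;> omega
  · rintro ⟨rfl, rfl⟩
    simp

theorem stmt_19_general (r x : ℤ) (b α β : ℤ)
    (hα0 : 0 ≤ α) (hαr : α < r) (hβ0 : 0 ≤ β) (hβ : β < 1 + x * r)
    (hb : b = α * (1 + x * r) + β) :
    (b = 0 → α + β - (r - 1) * (Int.fdiv (α + β) r) = 0) ∧
    (1 ≤ b → 1 ≤ α + β - (r - 1) * (Int.fdiv (α + β) r)) := by
  have hb_zero : b = 0 ↔ α = 0 ∧ β = 0 := hb ▸ Int.mul_add_eq_zero_iff_of_lt hα0 hβ0 hβ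
  rw [Int.sub_pred_mul_fdiv_eq]
  constructor
  · intro h
    obtain ⟨rfl, rfl⟩ := hb_zero.mp h
    simp
  · intro h
    have hαβ : 0 < α + β := by
      by_contra hle
      have : b = 0 := hb_zero.mpr ⟨by omega, by omega⟩
      omega
    exact Int.fdiv_add_fmod_pos (by omega) hαβ

theorem stmt_19 (r x : ℤ) (hr : 2 ≤ r) (hx : 1 ≤ x) (b α β : ℤ)
    (hb0 : 0 ≤ b) (hbN : b ≤ r * (x * r + 1) - 1)
    (hα0 : 0 ≤ α) (hαr : α < r) (hβ0 : 0 ≤ β) (hβ : β < 1 + x * r)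
    (hb : b = α * (1 + x * r) + β) :
    (b = 0 → α + β - (r - 1) * (Int.fdiv (α + β) r) = 0) ∧
    (1 ≤ b → 1 ≤ α + β - (r - 1) * (Int.fdiv (α + β) r)) :=
  stmt_19_general r x b α β hα0 hαr hβ0 hβ hb
end
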